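/- arXiv:2310.02844 — 2 statements merged into one kernel-verified Lean document; each statement's English description precedes it below -/
import Mathlib

section
/- Let κ ⊆ σ be integral cones in a lattice L. Then σ − κ = σ − mf(κ), where mf(κ) = σ ∩ (κ − σ) is the minimal face of σ containing κ. Moreover, the map τ ↦ σ − τ is an order-reversing bijection from the set of faces of σ (ordered by inclusion) onto the set of cofaces of σ (ordered by the coface relation): τ ⊆ τ′ if and only if σ − τ′ is a coface of σ − τ, and the inverse map sends a coface κ of σ to (κ ∩ (−κ)) ∩ σ. -/
open Pointwise

/-- An integral cone in `L`: a subset containing `0` and closed under addition. -/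
def IsCone {L : Type*} [AddCommMonoid L] (σ : Set L) : Prop :=
  0 ∈ σ ∧ ∀ a ∈ σ, ∀ b ∈ σ, a + b ∈ σ

/-- A face of a cone `σ`: a nonempty subset `τ ⊆ σ` such that for `a, b ∈ σ`,
`a + b ∈ τ` if and only if `a ∈ τ` and `b ∈ τ`. -/
def IsFace {L : Type*} [AddCommMonoid L] (σ τ : Set L) : Prop :=
  τ.Nonempty ∧ τ ⊆ σ ∧ ∀ a ∈ σ, ∀ b ∈ σ, (a + b ∈ τ ↔ a ∈ τ ∧ b ∈ τ)

/-- `σ'` is a coface of `σ`: the localisation `σ − κ` of `σ` at a subcone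
`κ ⊆ σ`. -/
def IsCoface {L : Type*} [AddCommGroup L] (σ' σ : Set L) : Prop :=
  ∃ κ : Set L, IsCone κ ∧ κ ⊆ σ ∧ σ' = σ - κ

/-! Every element `m` of the minimal face `σ ∩ (κ − σ)` satisfies `m + s ∈ κ` for some
`s ∈ σ`, so inverting `κ` already inverts `m`; hence `σ − κ` only depends on the minimal face
of `κ`. A face `τ` is recovered from `σ − τ` as the elements of `σ` invertible in `σ − τ`:
if `−x = s − t` then `x + s = t ∈ τ`, and the face condition forces `x ∈ τ`. This gives
injectivity and order reversal, and surjectivity follows since every coface `σ − κ` equals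
`σ − mf(κ)`. -/

section AddCommMonoid

variable {L : Type*} [AddCommMonoid L] {σ τ : Set L}

lemma IsFace.zero_mem (hσ : IsCone σ) (hτ : IsFace σ τ) : (0 : L) ∈ τ := by
  obtain ⟨⟨t, ht⟩, hτσ, hface⟩ := hτ
  exact ((hface t (hτσ ht) 0 hσ.1).mp (by rwa [add_zero])).2

lemma IsFace.isCone (hσ : IsCone σ) (hτ : IsFace σ τ) : IsCone τ :=
  ⟨hτ.zero_mem hσ, fun a ha b hb => (hτ.2.2 a (hτ.2.1 ha) b (hτ.2.1 hb)).mpr ⟨ha, hb⟩⟩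

end AddCommMonoid

section AddCommGroup

variable {L : Type*} [AddCommGroup L] {σ τ τ' κ κ' : Set L}

lemma IsCone.sub (hσ : IsCone σ) (hκ : IsCone κ) : IsCone (σ - κ) := by
  refine ⟨⟨0, hσ.1, 0, hκ.1, sub_zero 0⟩, ?_⟩
  rintro _ ⟨s, hs, k, hk, rfl⟩ _ ⟨s', hs', k', hk', rfl⟩
  exact ⟨s + s', hσ.2 s hs s' hs', k + k', hκ.2 k hk k' hk', add_sub_add_comm s s' k k'⟩

lemma IsCoface.superset (h : IsCoface κ σ) : σ ⊆ κ := by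
  obtain ⟨κ₀, hκ₀, -, rfl⟩ := h
  exact Set.subset_sub_left hκ₀.1

lemma IsFace.sub_inter_neg_sub_inter_eq (hσ : IsCone σ) (hτ : IsFace σ τ) :
    ((σ - τ) ∩ (-(σ - τ))) ∩ σ = τ := by
  refine Set.Subset.antisymm ?_ fun x hx =>
    ⟨⟨Set.subset_sub_left (hτ.zero_mem hσ) (hτ.2.1 hx),
      Set.neg_subset_sub_right hσ.1 (Set.neg_mem_neg.mpr hx)⟩, hτ.2.1 hx⟩
  rintro x ⟨⟨-, s, hs, t, ht, hst⟩, hx⟩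
  beta_reduce at hst
  have hxs : x + s = t := by rw [← neg_neg x, ← hst]; abel
  exact ((hτ.2.2 x hx s hs).mp (hxs ▸ ht)).1

lemma IsFace.subset_of_sub_subset (hσ : IsCone σ) (hτ : IsFace σ τ) (hτ' : IsFace σ τ')
    (h : σ - τ ⊆ σ - τ') : τ ⊆ τ' := by
  rw [← hτ.sub_inter_neg_sub_inter_eq hσ, ← hτ'.sub_inter_neg_sub_inter_eq hσ]
  exact Set.inter_subset_inter_left σ (Set.inter_subset_inter h (Set.neg_subset_neg.mpr h))

lemma sub_eq_sub_sub_sub (hσ : IsCone σ) (hκ : (0 : L) ∈ κ) (hκ' : IsCone κ') (hκσ : κ ⊆ σ)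
    (hκκ' : κ ⊆ κ') : σ - κ' = σ - κ - (κ' - κ) := by
  refine Set.Subset.antisymm
    (Set.sub_subset_sub (Set.subset_sub_left hκ) (Set.subset_sub_left hκ)) ?_
  rintro _ ⟨_, ⟨s, hs, k, hk, rfl⟩, _, ⟨k₁', hk₁', k₂, hk₂, rfl⟩, rfl⟩
  exact ⟨s + k₂, hσ.2 s hs k₂ (hκσ hk₂), k + k₁', hκ'.2 k (hκκ' hk) k₁' hk₁',
    by beta_reduce; abel⟩

lemma IsFace.isCoface_sub_of_subset (hσ : IsCone σ) (hτ : IsFace σ τ) (hτ' : IsFace σ τ')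
    (h : τ ⊆ τ') : IsCoface (σ - τ') (σ - τ) :=
  ⟨τ' - τ, (hτ'.isCone hσ).sub (hτ.isCone hσ), Set.sub_subset_sub_right hτ'.2.1,
    sub_eq_sub_sub_sub hσ (hτ.zero_mem hσ) (hτ'.isCone hσ) hτ.2.1 h⟩

def minimalFace (σ κ : Set L) : Set L :=
  σ ∩ (κ - σ)

lemma sub_minimalFace (hσ : IsCone σ) (hκσ : κ ⊆ σ) : σ - minimalFace σ κ = σ - κ := by
  refine Set.Subset.antisymm ?_
    (Set.sub_subset_sub_left fun k hk => ⟨hκσ hk, k, hk, 0, hσ.1, sub_zero k⟩)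
  rintro _ ⟨s, hs, m, ⟨-, k, hk, s', hs', rfl⟩, rfl⟩
  exact ⟨s + s', hσ.2 s hs s' hs', k, hk, by beta_reduce; abel⟩

lemma isFace_minimalFace (hσ : IsCone σ) (hκ : IsCone κ) : IsFace σ (minimalFace σ κ) := by
  refine ⟨⟨0, hσ.1, 0, hκ.1, 0, hσ.1, sub_zero 0⟩, Set.inter_subset_left,
    fun a ha b hb => ?_⟩
  constructor
  · rintro ⟨-, k, hk, s, hs, hks⟩
    beta_reduce at hks
    exact ⟨⟨ha, k, hk, s + b, hσ.2 s hs b hb, by simp only [← sub_sub, hks, add_sub_cancel_right]⟩,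
      ⟨hb, k, hk, s + a, hσ.2 s hs a ha, by simp only [← sub_sub, hks, add_sub_cancel_left]⟩⟩
  · rintro ⟨⟨-, k, hk, s, hs, rfl⟩, ⟨-, k', hk', s', hs', rfl⟩⟩
    exact ⟨hσ.2 _ ha _ hb, k + k', hκ.2 k hk k' hk', s + s', hσ.2 s hs s' hs',
      (sub_add_sub_comm k s k' s').symm⟩

end AddCommGroup

theorem stmt5_general
    {L : Type*} [AddCommGroup L]
    (σ : Set L) (hσ : IsCone σ) :
    -- localising at a subcone is localising at its minimal face
    (∀ κ : Set L, IsCone κ → κ ⊆ σ → σ - κ = σ - (σ ∩ (κ - σ))) ∧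
    -- order-reversing
    (∀ τ τ' : Set L, IsFace σ τ → IsFace σ τ' →
      (τ ⊆ τ' ↔ IsCoface (σ - τ') (σ - τ))) ∧
    -- `(κ ∩ (−κ)) ∩ σ` is a left inverse of `τ ↦ σ − τ`
    (∀ τ : Set L, IsFace σ τ → ((σ - τ) ∩ (-(σ - τ))) ∩ σ = τ) ∧
    -- and a right inverse: every coface arises from a face
    (∀ κ : Set L, IsCoface κ σ →
      IsFace σ ((κ ∩ (-κ)) ∩ σ) ∧ σ - ((κ ∩ (-κ)) ∩ σ) = κ) := by
  refine ⟨fun κ _ hκσ => (sub_minimalFace hσ hκσ).symm,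
    fun τ τ' hτ hτ' => ⟨hτ.isCoface_sub_of_subset hσ hτ',
      fun h => hτ.subset_of_sub_subset hσ hτ' h.superset⟩,
    fun τ hτ => hτ.sub_inter_neg_sub_inter_eq hσ, ?_⟩
  rintro _ ⟨κ, hκ, hκσ, rfl⟩
  have hmf := isFace_minimalFace hσ hκ
  rw [← sub_minimalFace hσ hκσ, hmf.sub_inter_neg_sub_inter_eq hσ]
  exact ⟨hmf, rfl⟩

/-- `σ − κ = σ − mf(κ)` where `mf(κ) = σ ∩ (κ − σ)`, and
`τ ↦ σ − τ` is an order-reversing bijection from faces of `σ` onto cofaces of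
`σ`, with inverse `κ ↦ (κ ∩ (−κ)) ∩ σ`. -/
theorem stmt5
    {L : Type*} [AddCommGroup L] [Module.Free ℤ L] [Module.Finite ℤ L]
    (σ : Set L) (hσ : IsCone σ) :
    -- localising at a subcone is localising at its minimal face
    (∀ κ : Set L, IsCone κ → κ ⊆ σ → σ - κ = σ - (σ ∩ (κ - σ))) ∧
    -- order-reversing
    (∀ τ τ' : Set L, IsFace σ τ → IsFace σ τ' →
      (τ ⊆ τ' ↔ IsCoface (σ - τ') (σ - τ))) ∧
    -- `(κ ∩ (−κ)) ∩ σ` is a left inverse of `τ ↦ σ − τ`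
    (∀ τ : Set L, IsFace σ τ → ((σ - τ) ∩ (-(σ - τ))) ∩ σ = τ) ∧
    -- and a right inverse: every coface arises from a face
    (∀ κ : Set L, IsCoface κ σ →
      IsFace σ ((κ ∩ (-κ)) ∩ σ) ∧ σ - ((κ ∩ (-κ)) ∩ σ) = κ) :=
  stmt5_general σ hσ
end

section
/- Let 𝒞 be a cofan in a lattice L. Then the set Δ = {τ : τ is a face of σ∨ for some σ ∈ 𝒞}, where σ∨ = {v ∈ Hom(L, ℤ) : v(a) ≥ 0 for all a ∈ σ} is the dual cone in the dual lattice L∨ = Hom(L, ℤ), is a fan in L∨: Δ is closed under taking faces, and the intersection of any two cones in Δ is a face of each of them. -/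
open Pointwise

/-- A cofan in `L`: a set of cones closed under cofaces such that the sum of
any two of its cones is a coface of the first. -/
def IsCofan {L : Type*} [AddCommGroup L] (C : Set (Set L)) : Prop :=
  (∀ σ ∈ C, IsCone σ) ∧
  (∀ σ ∈ C, ∀ τ : Set L, IsFace σ τ → σ - τ ∈ C) ∧
  (∀ σ ∈ C, ∀ σ' ∈ C, ∃ τ : Set L, IsFace σ τ ∧ σ + σ' = σ - τ)

/-- The dual cone of `σ ⊆ L` in the dual lattice `L∨ = Hom(L, ℤ)`. -/
def dualCone {L : Type*} [AddCommGroup L] (σ : Set L) : Set (L →+ ℤ) :=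
  {v | ∀ a ∈ σ, 0 ≤ v a}

/-- A fan: a set of cones closed under taking faces, any two of whose cones
intersect in a common face. -/
def IsFan {M : Type*} [AddCommMonoid M] (Δ : Set (Set M)) : Prop :=
  (∀ σ ∈ Δ, IsCone σ) ∧
  (∀ σ ∈ Δ, ∀ τ : Set M, IsFace σ τ → τ ∈ Δ) ∧
  (∀ σ ∈ Δ, ∀ σ' ∈ Δ, IsFace σ (σ ∩ σ') ∧ IsFace σ' (σ ∩ σ'))

/-- A face of a cone contains `0`. -/
lemma face_zero {L : Type*} [AddCommMonoid L] {σ τ : Set L} (hσ : IsCone σ)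
    (h : IsFace σ τ) : (0 : L) ∈ τ := by
  obtain ⟨⟨t, ht⟩, hsub, hface⟩ := h
  exact ((hface t (hsub ht) 0 hσ.1).mp (by simpa using ht)).2

/-- A face is closed under addition. -/
lemma face_add {L : Type*} [AddCommMonoid L] {σ τ : Set L}
    (h : IsFace σ τ) {a b : L} (ha : a ∈ τ) (hb : b ∈ τ) : a + b ∈ τ :=
  (h.2.2 a (h.2.1 ha) b (h.2.1 hb)).mpr ⟨ha, hb⟩

/-- A face of a cone is a cone. -/
lemma face_cone {L : Type*} [AddCommMonoid L] {σ τ : Set L} (hσ : IsCone σ)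
    (h : IsFace σ τ) : IsCone τ :=
  ⟨face_zero hσ h, fun _ ha _ hb => face_add h ha hb⟩

/-- A face of a face is a face. -/
lemma face_trans {L : Type*} [AddCommMonoid L] {σ τ ρ : Set L}
    (hτ : IsFace σ τ) (hρ : IsFace τ ρ) : IsFace σ ρ := by
  refine ⟨hρ.1, hρ.2.1.trans hτ.2.1, fun a ha b hb => ?_⟩
  constructor
  · intro hab
    have habτ : a + b ∈ τ := hρ.2.1 hab
    have := (hτ.2.2 a ha b hb).mp habτ
    exact (hρ.2.2 a this.1 b this.2).mp hab
  · rintro ⟨haρ, hbρ⟩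
    exact face_add hρ haρ hbρ

/-- The dual cone is a cone. -/
lemma dualCone_cone {L : Type*} [AddCommGroup L] (σ : Set L) :
    IsCone (dualCone σ) := by
  refine ⟨fun a _ => by simp, fun v hv w hw a ha => ?_⟩
  have := hv a ha
  have := hw a ha
  simp only [AddMonoidHom.add_apply]
  omega

/-- Key lemma: for `σ, σ'` in a cofan, the intersection of dual cones is a
face of `dualCone σ`. -/
lemma key {L : Type*} [AddCommGroup L] {C : Set (Set L)} (hC : IsCofan C)
    {σ σ' : Set L} (hσ : σ ∈ C) (hσ' : σ' ∈ C) :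
    IsFace (dualCone σ) (dualCone σ ∩ dualCone σ') := by
  have hσc : IsCone σ := hC.1 σ hσ
  have hσ'c : IsCone σ' := hC.1 σ' hσ'
  obtain ⟨κ, hκ, heq⟩ := hC.2.2 σ hσ σ' hσ'
  refine ⟨⟨0, (dualCone_cone σ).1, (dualCone_cone σ').1⟩, Set.inter_subset_left,
    fun v hv w hw => ?_⟩
  constructor
  · rintro ⟨hvw, hvw'⟩
    -- first: v and w vanish on κ
    have hk0 : ∀ k ∈ κ, v k = 0 ∧ w k = 0 := by
      intro k hk
      have hkσ : k ∈ σ := hκ.2.1 hk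
      have hneg : (0 : L) - k ∈ σ - κ := Set.sub_mem_sub hσc.1 hk
      rw [← heq] at hneg
      obtain ⟨s, hs, s', hs', hss⟩ := hneg
      have hss : s + s' = 0 - k := hss
      have h1 : 0 ≤ (v + w) s := by
        simp only [AddMonoidHom.add_apply]
        have := hv s hs; have := hw s hs; omega
      have h2 : 0 ≤ (v + w) s' := hvw' s' hs'
      have h3 : (v + w) s + (v + w) s' = -((v + w) k) := by
        rw [← map_add, hss]
        simp
        ring
      have h4 : v k + w k = (v + w) k := by simp
      have := hv k hkσ
      have := hw k hkσ
      omega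
    -- then v, w ∈ dualCone σ'
    have hmem : ∀ u : L →+ ℤ, (∀ a ∈ σ, 0 ≤ u a) → (∀ k ∈ κ, u k = 0) →
        u ∈ dualCone σ' := by
      intro u hu huk a' ha'
      have h1 : a' ∈ σ + σ' := ⟨0, hσc.1, a', ha', by simp⟩
      rw [heq] at h1
      obtain ⟨s, hs, k, hk, hsk⟩ := h1
      have hsk : s - k = a' := hsk
      have : u s - u k = u a' := by rw [← map_sub, hsk]
      have := hu s hs
      have := huk k hk
      omega
    exact ⟨⟨hv, hmem v hv fun k hk => (hk0 k hk).1⟩,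
           ⟨hw, hmem w hw fun k hk => (hk0 k hk).2⟩⟩
  · rintro ⟨⟨hv1, hv2⟩, ⟨hw1, hw2⟩⟩
    exact ⟨(dualCone_cone σ).2 v hv1 w hw1, (dualCone_cone σ').2 v hv2 w hw2⟩

/-- the faces of the dual cones of the cones of a cofan form a
fan in the dual lattice. -/
theorem stmt8
    {L : Type*} [AddCommGroup L] [Module.Free ℤ L] [Module.Finite ℤ L]
    (C : Set (Set L)) (hC : IsCofan C) :
    IsFan {τ : Set (L →+ ℤ) | ∃ σ ∈ C, IsFace (dualCone σ) τ} := by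
  refine ⟨?_, ?_, ?_⟩
  · rintro τ ⟨σ, hσ, hface⟩
    exact face_cone (dualCone_cone σ) hface
  · rintro τ ⟨σ, hσ, hface⟩ ρ hρ
    exact ⟨σ, hσ, face_trans hface hρ⟩
  · rintro τ ⟨σ, hσ, hface⟩ τ' ⟨σ', hσ', hface'⟩
    have hkey : IsFace (dualCone σ) (dualCone σ ∩ dualCone σ') := key hC hσ hσ'
    have hkey' : IsFace (dualCone σ') (dualCone σ' ∩ dualCone σ) := key hC hσ' hσ
    have h0 : (0 : L →+ ℤ) ∈ τ ∩ τ' :=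
      ⟨face_zero (dualCone_cone σ) hface, face_zero (dualCone_cone σ') hface'⟩
    constructor
    · refine ⟨⟨0, h0⟩, Set.inter_subset_left, fun a ha b hb => ?_⟩
      constructor
      · rintro ⟨habτ, habτ'⟩
        have haσ : a ∈ dualCone σ := hface.2.1 ha
        have hbσ : b ∈ dualCone σ := hface.2.1 hb
        have habmix : a + b ∈ dualCone σ ∩ dualCone σ' :=
          ⟨hface.2.1 habτ, hface'.2.1 habτ'⟩
        have := (hkey.2.2 a haσ b hbσ).mp habmix
        have haσ' : a ∈ dualCone σ' := this.1.2
        have hbσ' : b ∈ dualCone σ' := this.2.2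
        have := (hface'.2.2 a haσ' b hbσ').mp habτ'
        exact ⟨⟨(hface.2.2 a haσ b hbσ).mp habτ |>.1, this.1⟩,
               ⟨(hface.2.2 a haσ b hbσ).mp habτ |>.2, this.2⟩⟩
      · rintro ⟨⟨ha1, ha2⟩, ⟨hb1, hb2⟩⟩
        exact ⟨face_add hface ha1 hb1, face_add hface' ha2 hb2⟩
    · refine ⟨⟨0, h0⟩, Set.inter_subset_right, fun a ha b hb => ?_⟩
      constructor
      · rintro ⟨habτ, habτ'⟩
        have haσ' : a ∈ dualCone σ' := hface'.2.1 ha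
        have hbσ' : b ∈ dualCone σ' := hface'.2.1 hb
        have habmix : a + b ∈ dualCone σ' ∩ dualCone σ :=
          ⟨hface'.2.1 habτ', hface.2.1 habτ⟩
        have := (hkey'.2.2 a haσ' b hbσ').mp habmix
        have haσ : a ∈ dualCone σ := this.1.2
        have hbσ : b ∈ dualCone σ := this.2.2
        have h1 := (hface.2.2 a haσ b hbσ).mp habτ
        have h2 := (hface'.2.2 a haσ' b hbσ').mp habτ'
        exact ⟨⟨h1.1, h2.1⟩, ⟨h1.2, h2.2⟩⟩
      · rintro ⟨⟨ha1, ha2⟩, ⟨hb1, hb2⟩⟩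
        exact ⟨face_add hface ha1 hb1, face_add hface' ha2 hb2⟩
end
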